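/- arXiv:2005.10711 — 9 statements merged into one kernel-verified Lean document; each statement's English description precedes it below -/
import Mathlib

section
/- Let 1−Q ≤ x < y < Q and assume ∫_y^Q φ(z) dz > 0 (so that 1−F₀(y) > 0). Then (1−F₁(x))/(1−F₀(x)) ≤ (1−F₁(y))/(1−F₀(y)); that is, the likelihood ratio x ↦ (1−F₁(x))/(1−F₀(x)) inferred from the event {type > x} is monotone nondecreasing on [1−Q, Q). -/
/-!
Write `I(a, b) = ∫_a^b φ` and `J(a, b) = ∫_a^b z φ(z) dz`, so that `1 - F₁(t) = J(t, Q)` and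
`1 - F₀(t) = I(t, Q) - J(t, Q)`. The ratio in question is then `r / (1 - r)` for the conditional
mean `r = J(t, Q) / I(t, Q)` of the type above `t`, and that conditional mean is nondecreasing in
`t`: below `y` the mean of `z` is at most `y`, above `y` it is at least `y`.
-/

open MeasureTheory intervalIntegral

section ConditionalMean

variable {φ : ℝ → ℝ} {a b m : ℝ}

theorem integral_id_mul_le_mul_integral (hφ : ∀ z, 0 ≤ φ z) (hab : a ≤ b)
    (hi : IntervalIntegrable φ volume a b) :
    ∫ z in a..b, z * φ z ≤ b * ∫ z in a..b, φ z := by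
  rw [← intervalIntegral.integral_const_mul]
  exact integral_mono_on hab (hi.continuousOn_mul continuousOn_id) (hi.const_mul b)
    fun z hz => mul_le_mul_of_nonneg_right hz.2 (hφ z)

theorem mul_integral_le_integral_id_mul (hφ : ∀ z, 0 ≤ φ z) (hab : a ≤ b)
    (hi : IntervalIntegrable φ volume a b) :
    a * ∫ z in a..b, φ z ≤ ∫ z in a..b, z * φ z := by
  rw [← intervalIntegral.integral_const_mul]
  exact integral_mono_on hab (hi.const_mul a) (hi.continuousOn_mul continuousOn_id)
    fun z hz => mul_le_mul_of_nonneg_right hz.1 (hφ z)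

theorem integral_id_mul_lt_integral (hφ : ∀ z, 0 ≤ φ z) (hab : a ≤ b) (hb : b < 1)
    (hi : IntervalIntegrable φ volume a b) (hpos : 0 < ∫ z in a..b, φ z) :
    ∫ z in a..b, z * φ z < ∫ z in a..b, φ z := by
  have hmean := integral_id_mul_le_mul_integral hφ hab hi
  have hgap : 0 < (1 - b) * ∫ z in a..b, φ z := mul_pos (sub_pos.2 hb) hpos
  linarith

theorem integral_id_mul_mul_integral_le (hφ : ∀ z, 0 ≤ φ z) (ham : a ≤ m) (hmb : m ≤ b)
    (hi₁ : IntervalIntegrable φ volume a m) (hi₂ : IntervalIntegrable φ volume m b) :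
    (∫ z in a..m, z * φ z) * ∫ z in m..b, φ z ≤
      (∫ z in m..b, z * φ z) * ∫ z in a..m, φ z :=
  calc (∫ z in a..m, z * φ z) * ∫ z in m..b, φ z
      ≤ (m * ∫ z in a..m, φ z) * ∫ z in m..b, φ z :=
        mul_le_mul_of_nonneg_right (integral_id_mul_le_mul_integral hφ ham hi₁)
          (integral_nonneg hmb fun z _ => hφ z)
    _ = (m * ∫ z in m..b, φ z) * ∫ z in a..m, φ z := by ring
    _ ≤ (∫ z in m..b, z * φ z) * ∫ z in a..m, φ z :=
        mul_le_mul_of_nonneg_right (mul_integral_le_integral_id_mul hφ hmb hi₂)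
          (integral_nonneg ham fun z _ => hφ z)

theorem integral_id_mul_mul_integral_le_of_le (hφ : ∀ z, 0 ≤ φ z) (ham : a ≤ m) (hmb : m ≤ b)
    (hi₁ : IntervalIntegrable φ volume a m) (hi₂ : IntervalIntegrable φ volume m b) :
    (∫ z in a..b, z * φ z) * ∫ z in m..b, φ z ≤
      (∫ z in m..b, z * φ z) * ∫ z in a..b, φ z := by
  have hcross := integral_id_mul_mul_integral_le hφ ham hmb hi₁ hi₂
  rw [← integral_add_adjacent_intervals hi₁ hi₂,
    ← integral_add_adjacent_intervals (f := fun z => z * φ z)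
      (hi₁.continuousOn_mul continuousOn_id) (hi₂.continuousOn_mul continuousOn_id)]
  linarith

end ConditionalMean

theorem invest_likelihood_ratio_monotone_general
    (Q : ℝ) (hQ1 : Q < 1)
    (φ : ℝ → ℝ) (hφ_nonneg : ∀ z, 0 ≤ φ z)
    (hφ_int : Integrable φ)
    (F1 F0 : ℝ → ℝ)
    (hF1 : ∀ x, F1 x = ∫ y in (1 - Q)..x, y * φ y)
    (hF0 : ∀ x, F0 x = ∫ y in (1 - Q)..x, (1 - y) * φ y)
    (hF1Q : F1 Q = 1) (hF0Q : F0 Q = 1)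
    (x y : ℝ) (hxy : x < y) (hyQ : y < Q)
    (hpos : 0 < ∫ z in y..Q, φ z) :
    (1 - F1 x) / (1 - F0 x) ≤ (1 - F1 y) / (1 - F0 y) := by
  have hi (a b : ℝ) : IntervalIntegrable φ volume a b := hφ_int.intervalIntegrable
  have hi₁ (a b : ℝ) : IntervalIntegrable (fun z => z * φ z) volume a b :=
    (hi a b).continuousOn_mul continuousOn_id
  have tail₁ (t : ℝ) : 1 - F1 t = ∫ z in t..Q, z * φ z := by
    rw [← hF1Q, hF1, hF1, integral_interval_sub_left (hi₁ _ _) (hi₁ _ _)]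
  have tail₀ (t : ℝ) : 1 - F0 t = (∫ z in t..Q, φ z) - ∫ z in t..Q, z * φ z := by
    have hF0' (s : ℝ) : F0 s = ∫ z in (1 - Q)..s, (φ z - z * φ z) := by
      simp only [hF0, sub_mul, one_mul]
    rw [← hF0Q, hF0', hF0', integral_interval_sub_left ((hi _ _).sub (hi₁ _ _))
      ((hi _ _).sub (hi₁ _ _)), integral_sub (hi _ _) (hi₁ _ _)]
  have hpos_x : 0 < ∫ z in x..Q, φ z := hpos.trans_le <|
    integral_mono_interval hxy.le hyQ.le le_rfl (ae_of_all _ hφ_nonneg) (hi x Q)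
  have hden_x : 0 < 1 - F0 x := by
    rw [tail₀]
    exact sub_pos.2 (integral_id_mul_lt_integral hφ_nonneg (hxy.trans hyQ).le hQ1 (hi x Q) hpos_x)
  have hden_y : 0 < 1 - F0 y := by
    rw [tail₀]
    exact sub_pos.2 (integral_id_mul_lt_integral hφ_nonneg hyQ.le hQ1 (hi y Q) hpos)
  have hmean := integral_id_mul_mul_integral_le_of_le hφ_nonneg hxy.le hyQ.le (hi x y) (hi y Q)
  rw [div_le_div_iff₀ hden_x hden_y, tail₁, tail₁, tail₀, tail₀]
  linarith

/-- The likelihood ratio `x ↦ (1 − F₁(x))/(1 − F₀(x))` inferred from the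
event `{type > x}` is monotone nondecreasing on `[1−Q, Q)`. -/
theorem invest_likelihood_ratio_monotone
    (Q : ℝ) (hQhalf : 1/2 < Q) (hQ1 : Q < 1)
    (φ : ℝ → ℝ) (hφ_nonneg : ∀ z, 0 ≤ φ z)
    (hφ_int : Integrable φ)
    (hφ_supp : ∀ z, z < 1 - Q ∨ Q < z → φ z = 0)
    (F1 F0 : ℝ → ℝ)
    (hF1 : ∀ x, F1 x = ∫ y in (1 - Q)..x, y * φ y)
    (hF0 : ∀ x, F0 x = ∫ y in (1 - Q)..x, (1 - y) * φ y)
    (hF1Q : F1 Q = 1) (hF0Q : F0 Q = 1)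
    (x y : ℝ) (hx : 1 - Q ≤ x) (hxy : x < y) (hyQ : y < Q)
    (hpos : 0 < ∫ z in y..Q, φ z) :
    (1 - F1 x) / (1 - F0 x) ≤ (1 - F1 y) / (1 - F0 y) :=
  invest_likelihood_ratio_monotone_general Q hQ1 φ hφ_nonneg hφ_int F1 F0 hF1 hF0 hF1Q hF0Q x y hxy
    hyQ hpos
end

section
/- Let 1−Q < x < y ≤ Q and assume ∫_{1−Q}^x φ(z) dz > 0 (so that F₀(x) > 0). Then F₁(x)/F₀(x) ≤ F₁(y)/F₀(y); that is, the likelihood ratio x ↦ F₁(x)/F₀(x) inferred from the event {type ≤ x} is monotone nondecreasing on (1−Q, Q]. -/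
open MeasureTheory intervalIntegral

/-- The likelihood ratio `x ↦ F₁(x)/F₀(x)` inferred from the event
`{type ≤ x}` is monotone nondecreasing on `(1−Q, Q]`. -/
theorem decline_likelihood_ratio_monotone
    (Q : ℝ) (hQhalf : 1/2 < Q) (hQ1 : Q < 1)
    (φ : ℝ → ℝ) (hφ_nonneg : ∀ z, 0 ≤ φ z)
    (hφ_int : Integrable φ)
    (hφ_supp : ∀ z, z < 1 - Q ∨ Q < z → φ z = 0)
    (F1 F0 : ℝ → ℝ)
    (hF1 : ∀ x, F1 x = ∫ y in (1 - Q)..x, y * φ y)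
    (hF0 : ∀ x, F0 x = ∫ y in (1 - Q)..x, (1 - y) * φ y)
    (hF1Q : F1 Q = 1) (hF0Q : F0 Q = 1)
    (x y : ℝ) (hx : 1 - Q < x) (hxy : x < y) (hyQ : y ≤ Q)
    (hpos : 0 < ∫ z in (1 - Q)..x, φ z) :
    F1 x / F0 x ≤ F1 y / F0 y := by
  set a := 1 - Q with ha
  have hax : a ≤ x := le_of_lt hx
  have hxy' : x ≤ y := le_of_lt hxy
  have hx1 : x < 1 := lt_of_lt_of_le (lt_of_lt_of_le hxy hyQ) (le_of_lt hQ1)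
  have hx0 : 0 < x := lt_trans (by linarith) hx
  -- integrability
  have hφi : ∀ u v : ℝ, IntervalIntegrable φ volume u v := fun u v =>
    hφ_int.intervalIntegrable
  have h1i : ∀ u v : ℝ, IntervalIntegrable (fun z => z * φ z) volume u v := fun u v =>
    (hφi u v).continuousOn_mul (continuous_id.continuousOn)
  have h0i : ∀ u v : ℝ, IntervalIntegrable (fun z => (1 - z) * φ z) volume u v := fun u v =>
    (hφi u v).continuousOn_mul ((continuous_const.sub continuous_id).continuousOn)
  have hci : ∀ (c : ℝ) (u v : ℝ), IntervalIntegrable (fun z => c * φ z) volume u v :=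
    fun c u v => (hφi u v).continuousOn_mul continuous_const.continuousOn
  set A1 := ∫ z in a..x, z * φ z with hA1
  set A0 := ∫ z in a..x, (1 - z) * φ z with hA0
  set B1 := ∫ z in x..y, z * φ z with hB1
  set B0 := ∫ z in x..y, (1 - z) * φ z with hB0
  set P := ∫ z in a..x, φ z with hP
  set R := ∫ z in x..y, φ z with hR
  have hconst : ∀ (c : ℝ) (u v : ℝ), (∫ z in u..v, c * φ z) = c * ∫ z in u..v, φ z :=
    fun c u v => intervalIntegral.integral_const_mul c φ
  -- key inequalities
  have hA1le : A1 ≤ x * P := by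
    rw [hA1, hP, ← hconst]
    apply intervalIntegral.integral_mono_on hax (h1i a x) (hci x a x)
    intro z hz
    exact mul_le_mul_of_nonneg_right hz.2 (hφ_nonneg z)
  have hA0ge : (1 - x) * P ≤ A0 := by
    rw [hA0, hP, ← hconst]
    apply intervalIntegral.integral_mono_on hax (hci (1 - x) a x) (h0i a x)
    intro z hz
    exact mul_le_mul_of_nonneg_right (by linarith [hz.2]) (hφ_nonneg z)
  have hB1ge : x * R ≤ B1 := by
    rw [hB1, hR, ← hconst]
    apply intervalIntegral.integral_mono_on hxy' (hci x x y) (h1i x y)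
    intro z hz
    exact mul_le_mul_of_nonneg_right hz.1 (hφ_nonneg z)
  have hB0le : B0 ≤ (1 - x) * R := by
    rw [hB0, hR, ← hconst]
    apply intervalIntegral.integral_mono_on hxy' (h0i x y) (hci (1 - x) x y)
    intro z hz
    exact mul_le_mul_of_nonneg_right (by linarith [hz.1]) (hφ_nonneg z)
  have hRnn : 0 ≤ R := by
    rw [hR]
    apply intervalIntegral.integral_nonneg hxy'
    intro z _; exact hφ_nonneg z
  have hB0nn : 0 ≤ B0 := by
    rw [hB0]
    apply intervalIntegral.integral_nonneg hxy'
    intro z hz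
    exact mul_nonneg (by linarith [hz.2, le_trans hz.2 hyQ]) (hφ_nonneg z)
  have hA0pos : 0 < A0 := lt_of_lt_of_le (by nlinarith) hA0ge
  -- splitting
  have hsplit1 : F1 y = A1 + B1 := by
    rw [hA1, hB1, hF1 y, intervalIntegral.integral_add_adjacent_intervals (h1i a x) (h1i x y)]
  have hsplit0 : F0 y = A0 + B0 := by
    rw [hA0, hB0, hF0 y, intervalIntegral.integral_add_adjacent_intervals (h0i a x) (h0i x y)]
  have hF1x : F1 x = A1 := by rw [hF1 x]
  have hF0x : F0 x = A0 := by rw [hF0 x]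
  have hF0ypos : 0 < F0 y := by rw [hsplit0]; linarith
  have hs : 0 < A0 + B0 := by linarith
  rw [hF1x, hF0x, hsplit1, hsplit0, div_le_div_iff₀ hA0pos hs]
  nlinarith [mul_le_mul_of_nonneg_right hA1le hB0nn,
    mul_le_mul_of_nonneg_left hB0le (by positivity : (0:ℝ) ≤ x * P),
    mul_le_mul_of_nonneg_right hB1ge (le_of_lt hA0pos),
    mul_le_mul_of_nonneg_left hA0ge (by positivity : (0:ℝ) ≤ x * R)]
end

section
/- For every x ∈ (1−Q, Q) with ∫_x^Q φ(z) dz > 0, one has x·(1−F₀(x)) < (1−x)·(1−F₁(x)); equivalently (1−F₀(x))/(1−x) < (1−F₁(x))/x. -/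
open MeasureTheory intervalIntegral

set_option maxHeartbeats 1000000 in
/-- For every `x ∈ (1−Q, Q)` with `∫_x^Q φ > 0`,
`x·(1−F₀(x)) < (1−x)·(1−F₁(x))`. -/
theorem upper_tail_ratio_ineq
    (Q : ℝ) (hQhalf : 1/2 < Q) (hQ1 : Q < 1)
    (φ : ℝ → ℝ) (hφ_nonneg : ∀ z, 0 ≤ φ z)
    (hφ_int : Integrable φ)
    (hφ_supp : ∀ z, z < 1 - Q ∨ Q < z → φ z = 0)
    (F1 F0 : ℝ → ℝ)
    (hF1 : ∀ x, F1 x = ∫ y in (1 - Q)..x, y * φ y)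
    (hF0 : ∀ x, F0 x = ∫ y in (1 - Q)..x, (1 - y) * φ y)
    (hF1Q : F1 Q = 1) (hF0Q : F0 Q = 1)
    (x : ℝ) (hx : 1 - Q < x) (hxQ : x < Q)
    (hpos : 0 < ∫ z in x..Q, φ z) :
    x * (1 - F0 x) < (1 - x) * (1 - F1 x) := by
  have hxQ' : x ≤ Q := le_of_lt hxQ
  have hint1 : ∀ a b : ℝ, IntervalIntegrable (fun y => y * φ y) volume a b := by
    intro a b
    exact (hφ_int.intervalIntegrable).continuousOn_mul (continuous_id.continuousOn)
  have hint0 : ∀ a b : ℝ, IntervalIntegrable (fun y => (1 - y) * φ y) volume a b := by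
    intro a b
    exact (hφ_int.intervalIntegrable).continuousOn_mul
      ((continuous_const.sub continuous_id).continuousOn)
  -- tail expressions
  have h1 : 1 - F1 x = ∫ y in x..Q, y * φ y := by
    have hadd := integral_add_adjacent_intervals (hint1 (1 - Q) x) (hint1 x Q)
    have h' : F1 x + (∫ y in x..Q, y * φ y) = F1 Q := by rw [hF1 x, hF1 Q]; exact hadd
    linarith
  have h0 : 1 - F0 x = ∫ y in x..Q, (1 - y) * φ y := by
    have hadd := integral_add_adjacent_intervals (hint0 (1 - Q) x) (hint0 x Q)
    have h' : F0 x + (∫ y in x..Q, (1 - y) * φ y) = F0 Q := by rw [hF0 x, hF0 Q]; exact hadd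
    linarith
  rw [h1, h0]
  have hkey : 0 < ∫ y in x..Q, (y - x) * φ y := by
    have hintk : IntervalIntegrable (fun y => (y - x) * φ y) volume x Q :=
      (hφ_int.intervalIntegrable).continuousOn_mul
        ((continuous_id.sub continuous_const).continuousOn)
    have hintkOn : IntegrableOn (fun y => (y - x) * φ y) (Set.Ioc x Q) volume :=
      (intervalIntegrable_iff_integrableOn_Ioc_of_le hxQ').mp hintk
    have hnn : 0 ≤ᵐ[volume.restrict (Set.Ioc x Q)] fun y => (y - x) * φ y := by
      filter_upwards [ae_restrict_mem measurableSet_Ioc] with y hy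
      exact mul_nonneg (by linarith [hy.1]) (hφ_nonneg y)
    have hnn' : 0 ≤ ∫ y in Set.Ioc x Q, (y - x) * φ y := integral_nonneg_of_ae hnn
    rw [intervalIntegral.integral_of_le hxQ']
    rcases hnn'.lt_or_eq with h | h
    · exact h
    · exfalso
      have hzero : (fun y => (y - x) * φ y) =ᵐ[volume.restrict (Set.Ioc x Q)] 0 :=
        (setIntegral_eq_zero_iff_of_nonneg_ae hnn hintkOn).mp h.symm
      have hφ0 : φ =ᵐ[volume.restrict (Set.Ioc x Q)] 0 := by
        filter_upwards [hzero, ae_restrict_mem measurableSet_Ioc] with y hy hy2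
        have hyx : y - x ≠ 0 := by have := hy2.1; intro hc; linarith
        simpa [hyx] using (mul_eq_zero.mp hy).resolve_left hyx
      have : (∫ z in x..Q, φ z) = 0 := by
        rw [intervalIntegral.integral_of_le hxQ']
        exact integral_eq_zero_of_ae hφ0
      linarith
  have heq : (1 - x) * (∫ y in x..Q, y * φ y) - x * (∫ y in x..Q, (1 - y) * φ y)
      = ∫ y in x..Q, (y - x) * φ y := by
    rw [← intervalIntegral.integral_const_mul (1 - x) (fun y => y * φ y),
        ← intervalIntegral.integral_const_mul x (fun y => (1 - y) * φ y),
        ← intervalIntegral.integral_sub ((hint1 x Q).const_mul (1 - x)) ((hint0 x Q).const_mul x)]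
    congr 1; ext y; ring
  linarith
end

section
/- For every x ∈ (1−Q, Q) with ∫_{1−Q}^x φ(z) dz > 0, one has (1−x)·F₁(x) < x·F₀(x); equivalently F₀(x)/(1−x) > F₁(x)/x. -/
open MeasureTheory intervalIntegral

/-- For every `x ∈ (1−Q, Q)` with `∫_{1−Q}^x φ > 0`,
`(1−x)·F₁(x) < x·F₀(x)`. -/
theorem lower_tail_ratio_ineq
    (Q : ℝ) (hQhalf : 1/2 < Q) (hQ1 : Q < 1)
    (φ : ℝ → ℝ) (hφ_nonneg : ∀ z, 0 ≤ φ z)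
    (hφ_int : Integrable φ)
    (hφ_supp : ∀ z, z < 1 - Q ∨ Q < z → φ z = 0)
    (F1 F0 : ℝ → ℝ)
    (hF1 : ∀ x, F1 x = ∫ y in (1 - Q)..x, y * φ y)
    (hF0 : ∀ x, F0 x = ∫ y in (1 - Q)..x, (1 - y) * φ y)
    (hF1Q : F1 Q = 1) (hF0Q : F0 Q = 1)
    (x : ℝ) (hx : 1 - Q < x) (hxQ : x < Q)
    (hpos : 0 < ∫ z in (1 - Q)..x, φ z) :
    (1 - x) * F1 x < x * F0 x := by
  have hax : (1 - Q) ≤ x := le_of_lt hx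
  have hsupp : ∀ y, φ y ≠ 0 → (1 - Q) ≤ y ∧ y ≤ Q := by
    intro y hy
    by_contra h
    push_neg at h
    rcases lt_or_ge y (1 - Q) with h1 | h1
    · exact hy (hφ_supp y (Or.inl h1))
    · exact hy (hφ_supp y (Or.inr (h h1)))
  have hmφ := hφ_int.aestronglyMeasurable
  have bdd_mul : ∀ c : ℝ → ℝ, Continuous c → (∀ y, φ y ≠ 0 → ‖c y‖ ≤ 1) →
      Integrable (fun y => c y * φ y) := by
    intro c hc hb
    refine hφ_int.mono (hc.aestronglyMeasurable.mul hmφ)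
      (Filter.Eventually.of_forall fun y => ?_)
    by_cases h : φ y = 0
    · simp [h]
    · calc ‖c y * φ y‖ = ‖c y‖ * ‖φ y‖ := norm_mul _ _
        _ ≤ 1 * ‖φ y‖ := mul_le_mul_of_nonneg_right (hb y h) (norm_nonneg _)
        _ = ‖φ y‖ := one_mul _
  have hIg : Integrable (fun y => (x - y) * φ y) := by
    refine bdd_mul _ (continuous_const.sub continuous_id) fun y hy => ?_
    obtain ⟨h1, h2⟩ := hsupp y hy
    rw [Real.norm_eq_abs, abs_le]
    constructor <;> nlinarith
  have hIy : Integrable (fun y => y * φ y) := by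
    refine bdd_mul _ continuous_id fun y hy => ?_
    obtain ⟨h1, h2⟩ := hsupp y hy
    rw [Real.norm_eq_abs, abs_le]
    constructor <;> nlinarith
  have hI0 : Integrable (fun y => (1 - y) * φ y) := by
    refine bdd_mul _ (continuous_const.sub continuous_id) fun y hy => ?_
    obtain ⟨h1, h2⟩ := hsupp y hy
    rw [Real.norm_eq_abs, abs_le]
    constructor <;> nlinarith
  have hkey : x * F0 x - (1 - x) * F1 x = ∫ y in (1 - Q)..x, (x - y) * φ y := by
    rw [hF0 x, hF1 x, ← intervalIntegral.integral_const_mul,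
        ← intervalIntegral.integral_const_mul,
        ← intervalIntegral.integral_sub ((hI0.const_mul x).intervalIntegrable)
          ((hIy.const_mul (1 - x)).intervalIntegrable)]
    apply intervalIntegral.integral_congr
    intro y _
    ring
  have hpos' : 0 < ∫ y in Set.Ioc (1 - Q) x, φ y := by
    rwa [intervalIntegral.integral_of_le hax] at hpos
  have hsuppφ : 0 < volume (Function.support φ ∩ Set.Ioc (1 - Q) x) :=
    (MeasureTheory.setIntegral_pos_iff_support_of_nonneg_ae
      (Filter.Eventually.of_forall hφ_nonneg) hφ_int.integrableOn).mp hpos'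
  have hsub : (Function.support φ ∩ Set.Ioc (1 - Q) x) \ {x} ⊆
      Function.support (fun y => (x - y) * φ y) ∩ Set.Ioc (1 - Q) x := by
    rintro y ⟨⟨hyφ, hyI⟩, hyx⟩
    refine ⟨?_, hyI⟩
    have hylt : y < x := lt_of_le_of_ne hyI.2 (by simpa using hyx)
    have hφy : 0 < φ y := lt_of_le_of_ne (hφ_nonneg y) (Ne.symm hyφ)
    exact Function.mem_support.mpr (ne_of_gt (mul_pos (by linarith) hφy))
  have hgsupp : 0 < volume (Function.support (fun y => (x - y) * φ y) ∩ Set.Ioc (1 - Q) x) := by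
    calc 0 < volume (Function.support φ ∩ Set.Ioc (1 - Q) x) := hsuppφ
      _ = volume ((Function.support φ ∩ Set.Ioc (1 - Q) x) \ {x}) :=
        (measure_diff_null (measure_singleton x)).symm
      _ ≤ _ := measure_mono hsub
  have hgpos : 0 < ∫ y in Set.Ioc (1 - Q) x, (x - y) * φ y := by
    refine (MeasureTheory.setIntegral_pos_iff_support_of_nonneg_ae ?_ hIg.integrableOn).mpr hgsupp
    filter_upwards [MeasureTheory.ae_restrict_mem measurableSet_Ioc] with y hy
    exact mul_nonneg (by linarith [hy.2]) (hφ_nonneg y)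
  have hfin : 0 < ∫ y in (1 - Q)..x, (x - y) * φ y := by
    rwa [intervalIntegral.integral_of_le hax]
  linarith
end

section
/- Define h(Q) = 1/(1 + √((1−Q)(1+Q)/(Q(2−Q)))). Then there exists x ∈ (1−Q, Q) with H(x) ≥ Q/(1−Q) if and only if R ≥ h(Q). Moreover h(Q) > 1/2; in particular, when R = 1/2 no such x exists, i.e. up-cascades can never start. -/
/-!
Clearing denominators, `H x ≥ Q/(1-Q)` becomes `0 ≤ m x` for a piecewise polynomial margin `m`.
On the middle piece `[1-R, R]` the margin is linear and decreasing; on the left piece it factors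
as `(x - (1-Q)) ψ x` with `ψ` increasing; on the right piece it is negative outright. So the
margin is nonnegative somewhere on `(1-Q, Q)` iff it is at `x = 1 - R`, where it equals
`(Q - R) K` with `K = (1-Q)(1+Q) R² - Q(2-Q)(1-R)²`; and `0 ≤ K` is the squared form of
`h(Q) ≤ R`.
-/

open Set

lemma one_div_one_add_sqrt_le_iff {c R : ℝ} (hc : 0 ≤ c) (hR0 : 0 < R) (hR1 : R ≤ 1) :
    1 / (1 + √c) ≤ R ↔ (1 - R) ^ 2 ≤ c * R ^ 2 := by
  rw [div_le_iff₀ (by positivity), ← Real.le_sqrt (by linarith) (by positivity),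
    Real.sqrt_mul hc, Real.sqrt_sq hR0.le]
  constructor <;> intro h <;> linarith

lemma half_lt_one_div_one_add_sqrt {c : ℝ} (hc : c < 1) : 1 / 2 < 1 / (1 + √c) := by
  have : √c < 1 := (Real.sqrt_lt' one_pos).2 (by simpa using hc)
  exact one_div_lt_one_div_of_lt (by positivity) (by linarith)

lemma odds_le_mul_ratio_iff {q x a b : ℝ} (hq : q < 1) (hx : 0 < x) (hb : 0 < b) :
    q / (1 - q) ≤ (1 - x) / x * (a / b) ↔ q * x * b ≤ (1 - q) * (1 - x) * a := by
  rw [div_mul_div_comm, div_le_div_iff₀ (by linarith) (by positivity)]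
  constructor <;> intro h <;> linarith

namespace UniformCascade

/- `upTail Q R x` and `downTail Q R x` are `2 (Q - R)` times `1 - F₁ x` and `1 - F₀ x`: the
mass of qualities `q ∈ [R, Q]` whose signal (`q` or `1 - q`) exceeds `x`, in each state. -/

noncomputable def upTail (Q R x : ℝ) : ℝ :=
  if x ≤ 1 - R then (Q ^ 2 - R ^ 2) + ((1 - R) ^ 2 - x ^ 2)
  else if x ≤ R then Q ^ 2 - R ^ 2
  else Q ^ 2 - x ^ 2

noncomputable def downTail (Q R x : ℝ) : ℝ :=
  if x ≤ 1 - R then ((1 - R) ^ 2 - (1 - Q) ^ 2) + ((1 - x) ^ 2 - R ^ 2)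
  else if x ≤ R then (1 - R) ^ 2 - (1 - Q) ^ 2
  else (1 - x) ^ 2 - (1 - Q) ^ 2

noncomputable def margin (Q R x : ℝ) : ℝ :=
  (1 - Q) * (1 - x) * upTail Q R x - Q * x * downTail Q R x

def discriminant (Q R : ℝ) : ℝ :=
  (1 - Q) * (1 + Q) * R ^ 2 - Q * (2 - Q) * (1 - R) ^ 2

variable {Q R x : ℝ}

lemma discriminant_nonneg_iff (hQ0 : 0 < Q) (hQ2 : Q < 2) :
    0 ≤ discriminant Q R ↔ (1 - R) ^ 2 ≤ (1 - Q) * (1 + Q) / (Q * (2 - Q)) * R ^ 2 := by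
  rw [div_mul_eq_mul_div, le_div_iff₀ (mul_pos hQ0 (by linarith)), discriminant]
  constructor <;> intro h <;> linarith

lemma downTail_pos (hRQ : R < Q) (hQ : Q < 1) (hx : x ∈ Ioo (1 - Q) Q) :
    0 < downTail Q R x := by
  obtain ⟨hx1, hx2⟩ := hx
  have hmass : 0 < (1 - R) ^ 2 - (1 - Q) ^ 2 := by nlinarith
  unfold downTail
  split_ifs with hl
  · nlinarith
  · exact hmass
  · nlinarith

lemma margin_one_sub : margin Q R (1 - R) = (Q - R) * discriminant Q R := by
  simp only [margin, upTail, downTail, le_refl, if_true, discriminant]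
  ring

lemma margin_neg_of_le_one_sub (hR : 1 / 2 ≤ R)
    (hK : discriminant Q R < 0) (hx1 : 1 - Q < x) (hx2 : x ≤ 1 - R) : margin Q R x < 0 := by
  set ψ := (1 - 2 * Q) * x ^ 2 + 2 * Q ^ 2 * x - (2 * (Q - R) + (1 - Q) ^ 2)
  have hfactor : margin Q R x = (x - (1 - Q)) * ψ := by
    simp only [margin, upTail, downTail, if_pos hx2, ψ]
    ring
  -- `ψ` is increasing on the left piece and equals the discriminant at its right end.
  have hgap : discriminant Q R - ψ = (1 - R - x) * (2 * Q ^ 2 - (2 * Q - 1) * (1 - R + x)) := by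
    simp only [ψ, discriminant]
    ring
  have hslope : 0 ≤ 2 * Q ^ 2 - (2 * Q - 1) * (1 - R + x) := by
    nlinarith [mul_le_mul_of_nonneg_left (show 1 - R + x ≤ 1 by linarith)
      (show (0 : ℝ) ≤ 2 * Q - 1 by linarith)]
  have := mul_nonneg (show (0 : ℝ) ≤ 1 - R - x by linarith) hslope
  rw [hfactor]
  exact mul_neg_of_pos_of_neg (by linarith) (by linarith)

lemma margin_neg_of_mem_Ioc (hRQ : R < Q) (hQ : Q < 1) (hK : discriminant Q R < 0)
    (hx1 : 1 - R < x) (hx2 : x ≤ R) : margin Q R x < 0 := by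
  have hmiddle : margin Q R x - (Q - R) * discriminant Q R =
      -(Q - R) * (x - (1 - R)) * ((1 - Q) * (Q + R) + Q * (2 - Q - R)) := by
    simp only [margin, upTail, downTail, if_neg (not_le.2 hx1), if_pos hx2, discriminant]
    ring
  have : 0 ≤ (Q - R) * (x - (1 - R)) * ((1 - Q) * (Q + R) + Q * (2 - Q - R)) := by
    apply mul_nonneg (mul_nonneg _ _) _ <;> nlinarith
  nlinarith

lemma margin_neg_of_lt (hR : 1 / 2 ≤ R) (hQ : Q < 1) (hx1 : R < x) (hx2 : x < Q) :
    margin Q R x < 0 := by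
  set ψ := fun y : ℝ => (1 - Q) * (1 - y) * (Q + y) - Q * y * (2 - y - Q)
  have hfactor : margin Q R x = (Q - x) * ψ x := by
    simp only [margin, upTail, downTail, if_neg (show ¬x ≤ 1 - R by linarith),
      if_neg (not_le.2 hx1), ψ]
    ring
  -- `ψ` is a convex quadratic, negative at both ends of `[1/2, Q]`, hence on all of it.
  have hchord : (Q - 1 / 2) * ψ x - ((Q - x) * ψ (1 / 2) + (x - 1 / 2) * ψ Q) =
      -(2 * Q - 1) * (Q - 1 / 2) * (x - 1 / 2) * (Q - x) := by
    simp only [ψ]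
    ring
  have hψhalf : ψ (1 / 2) = -(2 * Q - 1) / 4 := by
    simp only [ψ]
    ring
  have hψQ : ψ Q = -(2 * Q * (1 - Q) * (2 * Q - 1)) := by
    simp only [ψ]
    ring
  have : 0 ≤ (2 * Q - 1) * (Q - 1 / 2) * (x - 1 / 2) * (Q - x) := by
    apply mul_nonneg (mul_nonneg (mul_nonneg _ _) _) _ <;> linarith
  have : 0 < 2 * Q * (1 - Q) * (2 * Q - 1) := by
    apply mul_pos (mul_pos _ _) _ <;> linarith
  have : (Q - 1 / 2) * ψ x < 0 := by nlinarith
  rw [hfactor]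
  exact mul_neg_of_pos_of_neg (by linarith) (by nlinarith)

lemma margin_neg (hR : 1 / 2 ≤ R) (hRQ : R < Q) (hQ : Q < 1) (hK : discriminant Q R < 0)
    (hx : x ∈ Ioo (1 - Q) Q) : margin Q R x < 0 := by
  obtain ⟨hx1, hx2⟩ := hx
  rcases le_or_gt x (1 - R) with hl | hl
  · exact margin_neg_of_le_one_sub hR hK hx1 hl
  rcases le_or_gt x R with hm | hm
  · exact margin_neg_of_mem_Ioc hRQ hQ hK hl hm
  · exact margin_neg_of_lt hR hQ hm hx2

end UniformCascade

open UniformCascade in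
/-- For qualities uniform on `[R, Q]`, an up-cascade can start
(i.e. `H(x) ≥ Q/(1−Q)` for some `x ∈ (1−Q, Q)`) iff `R ≥ h(Q)`, where
`h(Q) = 1/(1 + √((1−Q)(1+Q)/(Q(2−Q))))`; moreover `h(Q) > 1/2`, so in particular
when `R = 1/2` up-cascades can never start. -/
theorem uniform_min_R_for_cascades
    (R Q : ℝ) (hR : 1/2 ≤ R) (hRQ : R < Q) (hQ1 : Q < 1)
    (F1 F0 H : ℝ → ℝ)
    (hF1 : ∀ y ∈ Set.Icc (1 - Q) Q, F1 y =
      if y ≤ 1 - R then (y ^ 2 - (1 - Q) ^ 2) / (2 * (Q - R))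
      else if y ≤ R then 1 - (Q + R) / 2
      else 1 - (Q ^ 2 - y ^ 2) / (2 * (Q - R)))
    (hF0 : ∀ y ∈ Set.Icc (1 - Q) Q, F0 y =
      if y ≤ 1 - R then (Q ^ 2 - (1 - y) ^ 2) / (2 * (Q - R))
      else if y ≤ R then (Q + R) / 2
      else 1 - ((1 - y) ^ 2 - (1 - Q) ^ 2) / (2 * (Q - R)))
    (hH : ∀ x, H x = ((1 - x) / x) * ((1 - F1 x) / (1 - F0 x))) :
    ((∃ x, 1 - Q < x ∧ x < Q ∧ Q / (1 - Q) ≤ H x) ↔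
        1 / (1 + Real.sqrt ((1 - Q) * (1 + Q) / (Q * (2 - Q)))) ≤ R) ∧
      1/2 < 1 / (1 + Real.sqrt ((1 - Q) * (1 + Q) / (Q * (2 - Q)))) := by
  have hQ : 1 / 2 < Q := hR.trans_lt hRQ
  have hQR : Q - R ≠ 0 := by linarith
  have hH' : ∀ x ∈ Ioo (1 - Q) Q, Q / (1 - Q) ≤ H x ↔ 0 ≤ margin Q R x := by
    intro x hx
    have hx' := Ioo_subset_Icc_self hx
    have hup : 1 - F1 x = upTail Q R x / (2 * (Q - R)) := by
      rw [hF1 x hx', upTail]; split_ifs <;> field_simp <;> ring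
    have hdown : 1 - F0 x = downTail Q R x / (2 * (Q - R)) := by
      rw [hF0 x hx', downTail]; split_ifs <;> field_simp <;> ring
    rw [hH, hup, hdown, div_div_div_cancel_right₀ (mul_ne_zero two_ne_zero hQR),
      odds_le_mul_ratio_iff hQ1 (by linarith [hx.1]) (downTail_pos hRQ hQ1 hx), margin, sub_nonneg]
  refine ⟨?_, half_lt_one_div_one_add_sqrt ((div_lt_one (by nlinarith)).2 (by nlinarith))⟩
  rw [one_div_one_add_sqrt_le_iff (by apply div_nonneg <;> nlinarith) (by linarith) (by linarith),
    ← discriminant_nonneg_iff (by linarith) (by linarith)]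
  constructor
  · rintro ⟨x, hx1, hx2, hx⟩
    by_contra! hK
    exact (margin_neg hR hRQ hQ1 hK ⟨hx1, hx2⟩).not_ge ((hH' x ⟨hx1, hx2⟩).1 hx)
  · intro hK
    have hx : 1 - R ∈ Ioo (1 - Q) Q := ⟨by linarith, by linarith⟩
    refine ⟨1 - R, hx.1, hx.2, (hH' _ hx).2 ?_⟩
    rw [margin_one_sub]
    exact mul_nonneg (by linarith) hK
end

section
/- For every Q ∈ (1/2, 1), the number h(Q) = 1/(1 + √((1−Q)(1+Q)/(Q(2−Q)))) satisfies 1/2 < h(Q) < 1 and (h(Q)/(1−h(Q)))·((Q+h(Q))/(2−Q−h(Q))) = Q/(1−Q). -/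
/-!
Write `s = √((1−Q)(1+Q)/(Q(2−Q)))`, so that `h(Q) = 1/(1+s)`. Since `1/2 < Q < 1` we have
`0 < (1−Q)(1+Q) < Q(2−Q)`, hence `0 < s < 1` and `1/2 < h(Q) < 1`. For `r = 1/(1+s)` one has
`r/(1−r) = 1/s` and `(Q+r)/(2−Q−r) = (1+Q+Qs)/((1−Q)+(2−Q)s)`, and with these the identity
reduces to `Q(2−Q)s² = (1−Q)(1+Q)`, the defining equation of `s`.
-/

/-- The paper's `g`. -/
noncomputable def cascadeOdds (Q r : ℝ) : ℝ := r / (1 - r) * ((Q + r) / (2 - Q - r))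

lemma one_div_one_add_mem_Ioo {s : ℝ} (hs0 : 0 < s) (hs1 : s < 1) :
    1 / (1 + s) ∈ Set.Ioo (1 / 2) 1 := by
  have h1s : 0 < 1 + s := by linarith
  constructor
  · rw [div_lt_div_iff₀ two_pos h1s]; linarith
  · rw [div_lt_one h1s]; linarith

lemma sqrt_div_mem_Ioo {a b : ℝ} (ha : 0 < a) (hab : a < b) :
    Real.sqrt (a / b) ∈ Set.Ioo 0 1 :=
  ⟨Real.sqrt_pos.mpr (div_pos ha (ha.trans hab)),
    (Real.sqrt_lt' one_pos).mpr (by rwa [one_pow, div_lt_one (ha.trans hab)])⟩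

lemma mul_sq_sqrt_div {a b : ℝ} (ha : 0 ≤ a) (hb : 0 < b) : b * Real.sqrt (a / b) ^ 2 = a := by
  rw [Real.sq_sqrt (div_nonneg ha hb.le), mul_div_cancel₀ a hb.ne']

lemma cascadeOdds_one_div_one_add {Q s : ℝ} (hQ : Q < 1) (hs : 0 < s)
    (hsq : Q * (2 - Q) * s ^ 2 = (1 - Q) * (1 + Q)) :
    cascadeOdds Q (1 / (1 + s)) = Q / (1 - Q) := by
  have hden : 0 < (1 - Q) + (2 - Q) * s := by nlinarith
  have hodds : 1 / (1 + s) / (1 - 1 / (1 + s)) = 1 / s := by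
    field_simp [hs.ne']; ring
  have hshift : (Q + 1 / (1 + s)) / (2 - Q - 1 / (1 + s)) =
      (1 + Q + Q * s) / ((1 - Q) + (2 - Q) * s) := by
    field_simp; ring
  rw [cascadeOdds, hodds, hshift, one_div_mul_eq_div,
    div_div, div_eq_div_iff (mul_pos hden hs).ne' (by linarith)]
  linear_combination -hsq

/-- For every `Q ∈ (1/2, 1)`, the number
`h(Q) = 1/(1 + √((1−Q)(1+Q)/(Q(2−Q))))` lies in `(1/2, 1)` and satisfies
`(h(Q)/(1−h(Q)))·((Q+h(Q))/(2−Q−h(Q))) = Q/(1−Q)`. -/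
theorem h_Q_properties (Q : ℝ) (hQhalf : 1/2 < Q) (hQ1 : Q < 1) :
    1/2 < 1 / (1 + Real.sqrt ((1 - Q) * (1 + Q) / (Q * (2 - Q)))) ∧
      1 / (1 + Real.sqrt ((1 - Q) * (1 + Q) / (Q * (2 - Q)))) < 1 ∧
      (1 / (1 + Real.sqrt ((1 - Q) * (1 + Q) / (Q * (2 - Q)))) /
          (1 - 1 / (1 + Real.sqrt ((1 - Q) * (1 + Q) / (Q * (2 - Q)))))) *
        ((Q + 1 / (1 + Real.sqrt ((1 - Q) * (1 + Q) / (Q * (2 - Q))))) /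
          (2 - Q - 1 / (1 + Real.sqrt ((1 - Q) * (1 + Q) / (Q * (2 - Q)))))) =
      Q / (1 - Q) := by
  have hnum : 0 < (1 - Q) * (1 + Q) := by nlinarith
  have hlt : (1 - Q) * (1 + Q) < Q * (2 - Q) := by nlinarith
  obtain ⟨hs0, hs1⟩ := sqrt_div_mem_Ioo hnum hlt
  obtain ⟨hhalf, hone⟩ := one_div_one_add_mem_Ioo hs0 hs1
  exact ⟨hhalf, hone, cascadeOdds_one_div_one_add hQ1 hs0
    (mul_sq_sqrt_div hnum.le (hnum.trans hlt))⟩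
end

section
/- Let n ≥ 1, L > 0, x₁, …, xₙ ∈ (0,1), and let F₀, F₁ : (0,1) → [0,1) satisfy F₁(x) ≤ F₀(x) < 1 for all x. If the indifference system L·x_i/(1−x_i) = ∏_{k≠i} (1−F₀(x_k))/(1−F₁(x_k)) holds for every i ∈ {1,…,n}, then x_i ≤ 1/(1+L) for every i; moreover the inequality is strict for player i whenever F₁(x_k) < F₀(x_k) for some k ≠ i. (Social insurance: in a unanimity game every player's equilibrium threshold is at most the single-player threshold 1/(1+L), strictly so except for the last player or in a cascade.) -/
/-!
Write `r k = (1 - F₀(x k)) / (1 - F₁(x k))`. Stochastic dominance puts every `r k` in `(0, 1]`,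
with `r k < 1` exactly when the dominance is strict at `x k`. Hence the right-hand side of
player `i`'s indifference condition is at most `1`, and below `1` as soon as one factor is;
and `L x / (1 - x) ≤ 1` is the same as `x ≤ 1 / (1 + L)`, the single player's threshold.
-/

open Finset

lemma one_sub_div_one_sub_mem_Ioc {a b : ℝ} (hba : b ≤ a) (ha : a < 1) :
    (1 - a) / (1 - b) ∈ Set.Ioc 0 1 :=
  ⟨div_pos (by linarith) (by linarith), (div_le_one (by linarith)).2 (by linarith)⟩

lemma one_sub_div_one_sub_lt_one {a b : ℝ} (hba : b < a) (ha : a < 1) :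
    (1 - a) / (1 - b) < 1 :=
  (div_lt_one (by linarith)).2 (by linarith)

lemma mul_div_one_sub_le_one_iff {L x : ℝ} (hL : -1 < L) (hx : x < 1) :
    L * x / (1 - x) ≤ 1 ↔ x ≤ 1 / (1 + L) := by
  rw [div_le_one (by linarith), le_div_iff₀ (by linarith)]
  constructor <;> intro h <;> linarith

lemma mul_div_one_sub_lt_one_iff {L x : ℝ} (hL : -1 < L) (hx : x < 1) :
    L * x / (1 - x) < 1 ↔ x < 1 / (1 + L) := by
  rw [div_lt_one (by linarith), lt_div_iff₀ (by linarith)]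
  constructor <;> intro h <;> linarith

theorem social_insurance_unanimity_general
    (n : ℕ) (L : ℝ) (hL : 0 < L)
    (x : Fin n → ℝ) (hx : ∀ i, x i ∈ Set.Ioo (0 : ℝ) 1)
    (F0 F1 : ℝ → ℝ)
    (hF : ∀ t ∈ Set.Ioo (0 : ℝ) 1, 0 ≤ F1 t ∧ F1 t ≤ F0 t ∧ F0 t < 1)
    (hind : ∀ i, L * x i / (1 - x i) =
      ∏ k ∈ univ.erase i, (1 - F0 (x k)) / (1 - F1 (x k))) :
    (∀ i, x i ≤ 1 / (1 + L)) ∧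
      ∀ i, (∃ k, k ≠ i ∧ F1 (x k) < F0 (x k)) → x i < 1 / (1 + L) := by
  have hL' : -1 < L := by linarith
  have hratio k : (1 - F0 (x k)) / (1 - F1 (x k)) ∈ Set.Ioc 0 1 :=
    one_sub_div_one_sub_mem_Ioc (hF _ (hx k)).2.1 (hF _ (hx k)).2.2
  constructor
  · intro i
    rw [← mul_div_one_sub_le_one_iff hL' (hx i).2, hind]
    exact prod_le_one (fun k _ ↦ (hratio k).1.le) (fun k _ ↦ (hratio k).2)
  · rintro i ⟨k, hki, hstrict⟩
    have hk : (1 - F0 (x k)) / (1 - F1 (x k)) < 1 :=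
      one_sub_div_one_sub_lt_one hstrict (hF _ (hx k)).2.2
    rw [← mul_div_one_sub_lt_one_iff hL' (hx i).2, hind]
    calc _ < ∏ _j ∈ univ.erase i, (1 : ℝ) :=
          prod_lt_prod (fun j _ ↦ (hratio j).1) (fun j _ ↦ (hratio j).2)
            ⟨k, mem_erase.2 ⟨hki, mem_univ k⟩, hk⟩
      _ = 1 := prod_const_one

/-- Social insurance: in a unanimity game every player's equilibrium
threshold is at most the single-player threshold `1/(1+L)`, strictly so whenever some
other player's threshold satisfies strict stochastic dominance. -/
theorem social_insurance_unanimity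
    (n : ℕ) (hn : 1 ≤ n) (L : ℝ) (hL : 0 < L)
    (x : Fin n → ℝ) (hx : ∀ i, x i ∈ Set.Ioo (0 : ℝ) 1)
    (F0 F1 : ℝ → ℝ)
    (hF : ∀ t ∈ Set.Ioo (0 : ℝ) 1, 0 ≤ F1 t ∧ F1 t ≤ F0 t ∧ F0 t < 1)
    (hind : ∀ i, L * x i / (1 - x i) =
      ∏ k ∈ univ.erase i, (1 - F0 (x k)) / (1 - F1 (x k))) :
    (∀ i, x i ≤ 1 / (1 + L)) ∧
      ∀ i, (∃ k, k ≠ i ∧ F1 (x k) < F0 (x k)) → x i < 1 / (1 + L) :=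
  social_insurance_unanimity_general n L hL x hx F0 F1 hF hind
end

section
/- Let M > 0, let x_i, x_j ∈ (0,1), and let F₀, F₁ : (0,1) → [0,1) be functions. Define J(x) = (x/(1−x))·(1−F₀(x))/(1−F₁(x)). If M·x_i/(1−x_i) = (1−F₀(x_j))/(1−F₁(x_j)) and M·x_j/(1−x_j) = (1−F₀(x_i))/(1−F₁(x_i)), then J(x_i) = J(x_j). Consequently, if J is strictly monotone on an interval containing x_i and x_j, then x_i = x_j. (Two players in a unanimity game can play unequal equilibrium thresholds only if J is not strictly monotone between their thresholds.) -/
/-- If the thresholds `x_i, x_j` of two players in a unanimity game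
satisfy the pairwise indifference equations, then `J(x_i) = J(x_j)` where
`J(x) = (x/(1−x))·(1−F₀(x))/(1−F₁(x))`; consequently, if `J` is strictly monotone
on a set containing both thresholds, then `x_i = x_j`. -/
theorem equal_thresholds_hazard_rate
    (M : ℝ) (hM : 0 < M) (xi xj : ℝ)
    (hxi : xi ∈ Set.Ioo (0 : ℝ) 1) (hxj : xj ∈ Set.Ioo (0 : ℝ) 1)
    (F0 F1 : ℝ → ℝ)
    (hF : ∀ t ∈ Set.Ioo (0 : ℝ) 1, 0 ≤ F1 t ∧ F1 t < 1 ∧ 0 ≤ F0 t ∧ F0 t < 1)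
    (J : ℝ → ℝ)
    (hJ : ∀ t, J t = (t / (1 - t)) * ((1 - F0 t) / (1 - F1 t)))
    (heq_i : M * xi / (1 - xi) = (1 - F0 xj) / (1 - F1 xj))
    (heq_j : M * xj / (1 - xj) = (1 - F0 xi) / (1 - F1 xi)) :
    J xi = J xj ∧
      ∀ s : Set ℝ, xi ∈ s → xj ∈ s → StrictMonoOn J s → xi = xj := by
  have hJeq : J xi = J xj := by
    rw [hJ xi, hJ xj, ← heq_i, ← heq_j]
    ring
  refine ⟨hJeq, fun s hi hj hmono => hmono.injOn hi hj hJeq⟩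
end

section
/- Let Q ∈ (1/2, 1), n ≥ 2, L > 0, x₁, …, xₙ ∈ (0,1), and let F₀, F₁ : (0,1) → [0,1) satisfy F₁(x) ≤ F₀(x) < 1 for all x and F₀(x) = F₁(x) = 0 for all x ≤ 1−Q. Suppose the indifference system L·x_k/(1−x_k) = ∏_{m≠k} (1−F₀(x_m))/(1−F₁(x_m)) holds for every k, and that some player i delegates, i.e. x_i ≤ 1−Q. Then for every j ≠ i one has ((1−x_j)/x_j)·(1−F₁(x_j))/(1−F₀(x_j)) ≥ Q/(1−Q), the condition under which an investment by a player with threshold x_j would start an up-cascade in the information-cascades setting. If in addition (1−F₁(x))/(1−F₀(x)) ≤ Q/(1−Q) holds for all x, then x_j ≤ 1/2 for every j ∈ {1,…,n}. -/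
/-!
Write `r_m = (1 - F₀(x_m)) / (1 - F₁(x_m))`. Multiplying the `k`-th indifference equation by `r_k`
makes its right-hand side the full product `∏ r_m`, independent of `k`; hence the quantity
`odds(x_k) · r_k` is the same for every player. A delegating player has `r_i = 1` and
`odds(x_i) ≤ (1 - Q)/Q`, so `odds(x_j) · r_j ≤ (1 - Q)/Q` for all `j`, which is the up-cascade
condition; if also `r_j⁻¹ ≤ Q/(1 - Q)`, then `odds(x_j) ≤ 1`, i.e. `x_j ≤ 1/2`.
-/

open Finset

theorem mul_eq_mul_of_mul_eq_prod_erase {ι M : Type*} [Fintype ι] [DecidableEq ι]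
    [CommMonoidWithZero M] [IsLeftCancelMulZero M] {L : M} (hL : L ≠ 0) {a r : ι → M}
    (h : ∀ k, L * a k = ∏ m ∈ univ.erase k, r m) (j k : ι) :
    a j * r j = a k * r k := by
  have hfull : ∀ k, L * (a k * r k) = ∏ m, r m := fun k => by
    rw [← mul_assoc, h k, prod_erase_mul _ _ (mem_univ k)]
  exact mul_left_cancel₀ hL ((hfull j).trans (hfull k).symm)

namespace Fundraising

noncomputable def odds (p : ℝ) : ℝ := p / (1 - p)

theorem odds_pos {p : ℝ} (hp : p ∈ Set.Ioo (0 : ℝ) 1) : 0 < odds p :=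
  div_pos hp.1 (sub_pos.2 hp.2)

theorem odds_le_odds {p q : ℝ} (hq : q < 1) (hpq : p ≤ q) : odds p ≤ odds q := by
  rw [odds, odds, div_le_div_iff₀ (by linarith) (by linarith)]
  linarith

theorem odds_one_sub (Q : ℝ) : odds (1 - Q) = (1 - Q) / Q := by
  rw [odds, sub_sub_cancel]

theorem odds_le_one_iff {p : ℝ} (hp : p < 1) : odds p ≤ 1 ↔ p ≤ 1 / 2 := by
  rw [odds, div_le_one (by linarith)]
  constructor <;> intro <;> linarith

end Fundraising

open Fundraising in
theorem delegation_unanimity_general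
    (Q : ℝ) (hQhalf : 1/2 < Q) (hQ1 : Q < 1)
    (n : ℕ) (L : ℝ) (hL : 0 < L)
    (x : Fin n → ℝ) (hx : ∀ k, x k ∈ Set.Ioo (0 : ℝ) 1)
    (F0 F1 : ℝ → ℝ)
    (hF : ∀ t ∈ Set.Ioo (0 : ℝ) 1, 0 ≤ F1 t ∧ F1 t ≤ F0 t ∧ F0 t < 1)
    (hFzero : ∀ t : ℝ, t ≤ 1 - Q → F0 t = 0 ∧ F1 t = 0)
    (hind : ∀ k, L * x k / (1 - x k) =
      ∏ m ∈ univ.erase k, (1 - F0 (x m)) / (1 - F1 (x m)))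
    (i : Fin n) (hdel : x i ≤ 1 - Q) :
    (∀ j, j ≠ i →
        ((1 - x j) / x j) * ((1 - F1 (x j)) / (1 - F0 (x j))) ≥ Q / (1 - Q)) ∧
      ((∀ t ∈ Set.Ioo (0 : ℝ) 1, (1 - F1 t) / (1 - F0 t) ≤ Q / (1 - Q)) →
        ∀ j, x j ≤ 1/2) := by
  have hQ : 0 < Q := by linarith
  have hQ' : 0 < 1 - Q := by linarith
  set r : Fin n → ℝ := fun m => (1 - F0 (x m)) / (1 - F1 (x m))
  have hri : r i = 1 := by simp [r, hFzero (x i) hdel]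
  have hr_pos : ∀ j, 0 < r j := fun j => by
    obtain ⟨-, hF10, hF0⟩ := hF _ (hx j)
    exact div_pos (by linarith) (by linarith)
  have hconst : ∀ j, odds (x j) * r j = odds (x i) := fun j => by
    have := mul_eq_mul_of_mul_eq_prod_erase (a := fun k => odds (x k)) (r := r) hL.ne'
      (fun k => (mul_div_assoc L (x k) _).symm.trans (hind k)) j i
    rwa [hri, mul_one] at this
  have hi_le : odds (x i) ≤ (1 - Q) / Q := odds_one_sub Q ▸ odds_le_odds (by linarith) hdel
  refine ⟨fun j _ => ?_, fun hratio j => ?_⟩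
  · calc Q / (1 - Q) = ((1 - Q) / Q)⁻¹ := (inv_div _ _).symm
      _ ≤ (odds (x i))⁻¹ := inv_anti₀ (odds_pos (hx i)) hi_le
      _ = _ := by rw [← hconst j, odds, mul_inv, inv_div, inv_div]
  · rw [← odds_le_one_iff (hx j).2]
    calc odds (x j) = odds (x i) * (r j)⁻¹ := by
          rw [← hconst j, mul_inv_cancel_right₀ (hr_pos j).ne']
      _ ≤ (1 - Q) / Q * (Q / (1 - Q)) :=
          mul_le_mul hi_le (by simpa [r, inv_div] using hratio _ (hx j))
            (inv_pos.2 (hr_pos j)).le (div_pos hQ' hQ).le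
      _ = 1 := by field_simp

/-- Delegation: in a unanimity game, if player `i` delegates
(`x_i ≤ 1−Q`), then every other player's threshold satisfies the up-cascade trigger
condition `((1−x_j)/x_j)·(1−F₁(x_j))/(1−F₀(x_j)) ≥ Q/(1−Q)`; if moreover
`(1−F₁)/(1−F₀) ≤ Q/(1−Q)` everywhere, then all thresholds are at most `1/2`. -/
theorem delegation_unanimity
    (Q : ℝ) (hQhalf : 1/2 < Q) (hQ1 : Q < 1)
    (n : ℕ) (hn : 2 ≤ n) (L : ℝ) (hL : 0 < L)
    (x : Fin n → ℝ) (hx : ∀ k, x k ∈ Set.Ioo (0 : ℝ) 1)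
    (F0 F1 : ℝ → ℝ)
    (hF : ∀ t ∈ Set.Ioo (0 : ℝ) 1, 0 ≤ F1 t ∧ F1 t ≤ F0 t ∧ F0 t < 1)
    (hFzero : ∀ t : ℝ, t ≤ 1 - Q → F0 t = 0 ∧ F1 t = 0)
    (hind : ∀ k, L * x k / (1 - x k) =
      ∏ m ∈ univ.erase k, (1 - F0 (x m)) / (1 - F1 (x m)))
    (i : Fin n) (hdel : x i ≤ 1 - Q) :
    (∀ j, j ≠ i →
        ((1 - x j) / x j) * ((1 - F1 (x j)) / (1 - F0 (x j))) ≥ Q / (1 - Q)) ∧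
      ((∀ t ∈ Set.Ioo (0 : ℝ) 1, (1 - F1 t) / (1 - F0 t) ≤ Q / (1 - Q)) →
        ∀ j, x j ≤ 1/2) :=
  delegation_unanimity_general Q hQhalf hQ1 n L hL x hx F0 F1 hF hFzero hind i hdel
end
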